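/- arXiv:1304.1451 — 3 statements merged into one kernel-verified Lean document; each statement's English description precedes it below -/
import Mathlib

section
/- Let 1<p<∞ and let μ be a positive finite Borel measure on the closed unit disk. If there exists C>0 such that ∫_{closed 𝔻} |f|^p dμ ≥ C·‖f‖_p^p for every function f that is continuous on the closed unit disk and holomorphic on the open unit disk, then there exists C'>0 such that ∫_{∂𝔻} |f|^p d(μ|_{∂𝔻}) ≥ C'·‖f‖_p^p for every such f; that is, the restriction of μ to the unit circle is already a reverse Carleson measure and the part of μ supported in the open disk can be dropped. -/
open MeasureTheory Complex Set Metric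

noncomputable section

/-- The `p`-th power mean of `f` on the circle of radius `r` (normalized by `2π`). -/
def hIntegral (p : ℝ) (f : ℂ → ℂ) (r : ℝ) : ℝ :=
  (1 / (2 * Real.pi)) *
    ∫ θ in (0:ℝ)..(2 * Real.pi), ‖f ((r : ℂ) * Complex.exp (θ * Complex.I))‖ ^ p

/-- `‖f‖_p ^ p`, the `p`-th power of the Hardy space `H^p` norm. -/
def hNormPow (p : ℝ) (f : ℂ → ℂ) : ℝ := sSup (hIntegral p f '' Ioo (0:ℝ) 1)

/-- The Hardy space `H^p` norm. -/
def hNorm (p : ℝ) (f : ℂ → ℂ) : ℝ := hNormPow p f ^ (1 / p)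

/-- `f` has finite `H^p` norm. -/
def HpFinite (p : ℝ) (f : ℂ → ℂ) : Prop := BddAbove (hIntegral p f '' Ioo (0:ℝ) 1)

/-- The `H^p` reproducing kernel `k_λ(z) = 1/(1 - conj(λ) z)`. -/
def hker (l : ℂ) : ℂ → ℂ := fun z => 1 / (1 - (starRingEnd ℂ) l * z)

/-- The normalized reproducing kernel `K_λ = k_λ / ‖k_λ‖_p`. -/
def hkerN (p : ℝ) (l : ℂ) : ℂ → ℂ := fun z => hker l z / (hNorm p (hker l) : ℂ)

/-- The arc of the unit circle starting at angle `a` of normalized length `ℓ`. -/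
def cArc (a ℓ : ℝ) : Set ℂ :=
  (fun θ : ℝ => Complex.exp (θ * Complex.I)) '' Ico a (a + 2 * Real.pi * ℓ)

/-- The modified Carleson window `S_{I,h}` over the arc of normalized length `ℓ`
starting at angle `a`, with radial depth `h`. -/
def cWindowH (a ℓ h : ℝ) : Set ℂ :=
  {z : ℂ | 1 - h ≤ ‖z‖ ∧ ‖z‖ ≤ 1 ∧ z / (‖z‖ : ℂ) ∈ cArc a ℓ}

/-- The Carleson window `S_I`. -/
def cWindow (a ℓ : ℝ) : Set ℂ := cWindowH a ℓ ℓ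

/-- Normalized Lebesgue (arclength over `2π`) measure on the unit circle `∂𝔻`. -/
def circM : Measure ℂ :=
  (ENNReal.ofReal (1 / (2 * Real.pi))) •
    Measure.map (fun θ : ℝ => Complex.exp (θ * Complex.I))
      (volume.restrict (Ico (0:ℝ) (2 * Real.pi)))

end

/-!
For `f` continuous on the closed disk and holomorphic inside, and `p ≥ 1`, the function `‖f‖ ^ p`
is subharmonic (Poisson formula plus Jensen's inequality), so the circle means `hIntegral p f r`
are dominated by the boundary mean, to which they converge as `r → 1`; thus `‖f‖_p ^ p` is the
boundary mean. Multiplying `f` by `z ^ n` leaves `|f|` on the circle, hence `‖f‖_p`, unchanged,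
while `∫ ‖z ^ n f‖ ^ p dμ` tends to `∫_{∂𝔻} ‖f‖ ^ p dμ` by dominated convergence. So the reverse
Carleson inequality for the functions `z ^ n f` passes, with the same constant, to `μ|_{∂𝔻}`.
-/

open Filter Topology
open scoped Real

theorem Real.rpow_add_mul_rpow_sub_one_mul_sub_le {p a x : ℝ} (hp : 1 ≤ p) (ha : 0 < a)
    (hx : 0 ≤ x) : a ^ p + p * a ^ (p - 1) * (x - a) ≤ x ^ p := by
  have hbern := one_add_mul_self_le_rpow_one_add (s := x / a - 1)
    (by linarith [div_nonneg hx ha.le]) hp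
  rw [add_sub_cancel, Real.div_rpow hx ha.le, le_div_iff₀ (by positivity)] at hbern
  calc a ^ p + p * a ^ (p - 1) * (x - a) = (1 + p * (x / a - 1)) * a ^ p := by
        rw [Real.rpow_sub_one ha.ne']; field_simp
    _ ≤ x ^ p := hbern

theorem rpow_integral_mul_le_integral_mul_rpow {α : Type*} [MeasurableSpace α] {μ : Measure α}
    {p : ℝ} (hp : 1 ≤ p) {w u : α → ℝ} (hw : 0 ≤ w) (hu : 0 ≤ u) (hw_int : ∫ x, w x ∂μ = 1)
    (hwu : Integrable (fun x ↦ w x * u x) μ) (hwup : Integrable (fun x ↦ w x * u x ^ p) μ) :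
    (∫ x, w x * u x ∂μ) ^ p ≤ ∫ x, w x * u x ^ p ∂μ := by
  set A := ∫ x, w x * u x ∂μ
  have hA : 0 ≤ A := integral_nonneg fun x ↦ mul_nonneg (hw x) (hu x)
  rcases hA.eq_or_lt with hA0 | hApos
  · rw [← hA0, Real.zero_rpow (by linarith)]
    exact integral_nonneg fun x ↦ mul_nonneg (hw x) (Real.rpow_nonneg (hu x) p)
  have hw' : Integrable w μ := Integrable.of_integral_ne_zero (by simp [hw_int])
  -- integrate the tangent line of `t ↦ t ^ p` at the mean `A`
  calc A ^ p
      = ∫ x, (A ^ p * w x + p * A ^ (p - 1) * (w x * u x) - p * A ^ (p - 1) * A * w x) ∂μ := by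
        rw [integral_sub, integral_add, integral_const_mul, integral_const_mul,
          integral_const_mul, hw_int]
        · ring
        all_goals fun_prop
    _ ≤ ∫ x, w x * u x ^ p ∂μ := by
        refine integral_mono (by fun_prop) hwup fun x ↦ ?_
        have := mul_le_mul_of_nonneg_left
          (Real.rpow_add_mul_rpow_sub_one_mul_sub_le hp hApos (hu x)) (hw x)
        linarith

theorem Real.norm_circleAverage_le {E : Type*} [NormedAddCommGroup E] [NormedSpace ℝ E]
    (f : ℂ → E) (c : ℂ) (R : ℝ) :
    ‖Real.circleAverage f c R‖ ≤ Real.circleAverage (fun z ↦ ‖f z‖) c R := by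
  rw [Real.circleAverage_def, Real.circleAverage_def, norm_smul,
    Real.norm_of_nonneg (by positivity), smul_eq_mul]
  gcongr
  exact intervalIntegral.norm_integral_le_integral_norm Real.two_pi_pos.le

theorem Real.circleAverage_eq_setIntegral (f : ℂ → ℝ) (c : ℂ) (R : ℝ) :
    Real.circleAverage f c R = ∫ θ in Ioc 0 (2 * π), (2 * π)⁻¹ * f (circleMap c R θ) := by
  rw [Real.circleAverage_def, smul_eq_mul, intervalIntegral.integral_of_le Real.two_pi_pos.le,
    integral_const_mul]

theorem intervalIntegral_intervalIntegral_swap_of_continuous {E : Type*} [NormedAddCommGroup E]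
    [NormedSpace ℝ E] [CompleteSpace E] {a b c d : ℝ} (hab : a ≤ b) (hcd : c ≤ d)
    {F : ℝ → ℝ → E} (hF : Continuous (Function.uncurry F)) :
    ∫ x in a..b, ∫ y in c..d, F x y = ∫ y in c..d, ∫ x in a..b, F x y := by
  simp only [intervalIntegral.integral_of_le hab, intervalIntegral.integral_of_le hcd]
  refine integral_integral_swap ?_
  rw [Measure.prod_restrict, ← Measure.volume_eq_prod]
  exact (hF.continuousOn.integrableOn_compact (isCompact_Icc.prod isCompact_Icc)).mono_set
    (prod_mono Ioc_subset_Icc_self Ioc_subset_Icc_self)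

theorem ContinuousOn.continuous_uncurry_circleMap {E : Type*} [TopologicalSpace E]
    {F : ℂ → ℂ → E} {c c' : ℂ} {R R' : ℝ}
    (hF : ContinuousOn (Function.uncurry F) (sphere c |R| ×ˢ sphere c' |R'|)) :
    Continuous (Function.uncurry fun θ t ↦ F (circleMap c R θ) (circleMap c' R' t)) :=
  hF.comp_continuous (f := fun x : ℝ × ℝ ↦ (circleMap c R x.1, circleMap c' R' x.2))
    (by fun_prop) fun x ↦ ⟨circleMap_mem_sphere' c R x.1, circleMap_mem_sphere' c' R' x.2⟩

theorem ContinuousOn.circleIntegrable_circleAverage {E : Type*} [NormedAddCommGroup E]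
    [NormedSpace ℝ E] [CompleteSpace E] {F : ℂ → ℂ → E} {c c' : ℂ} {R R' : ℝ}
    (hF : ContinuousOn (Function.uncurry F) (sphere c |R| ×ˢ sphere c' |R'|)) :
    CircleIntegrable (fun w ↦ Real.circleAverage (F w) c' R') c R :=
  ((intervalIntegral.continuous_parametric_intervalIntegral_of_continuous'
    hF.continuous_uncurry_circleMap 0 (2 * π)).const_smul _).intervalIntegrable _ _

theorem Real.circleAverage_circleAverage_comm {E : Type*} [NormedAddCommGroup E]
    [NormedSpace ℝ E] [CompleteSpace E] {F : ℂ → ℂ → E} {c c' : ℂ} {R R' : ℝ}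
    (hF : ContinuousOn (Function.uncurry F) (sphere c |R| ×ˢ sphere c' |R'|)) :
    Real.circleAverage (fun w ↦ Real.circleAverage (F w) c' R') c R =
      Real.circleAverage (fun z ↦ Real.circleAverage (fun w ↦ F w z) c R) c' R' := by
  simp only [Real.circleAverage_def, intervalIntegral.integral_smul]
  rw [intervalIntegral_intervalIntegral_swap_of_continuous Real.two_pi_pos.le
    Real.two_pi_pos.le hF.continuous_uncurry_circleMap]

theorem poissonKernel_nonneg {c w z : ℂ} (h : ‖w - c‖ ≤ ‖z - c‖) : 0 ≤ poissonKernel c w z :=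
  div_nonneg (sub_nonneg.2 (pow_le_pow_left₀ (norm_nonneg _) h 2)) (sq_nonneg _)

theorem circleAverage_poissonKernel {c w : ℂ} {R : ℝ} (hw : w ∈ ball c R) :
    Real.circleAverage (poissonKernel c w) c R = 1 := by
  simpa [Pi.mul_def] using
    (InnerProductSpace.harmonicContOnCl_const (c := (1 : ℝ))).circleAverage_poissonKernel_smul hw

theorem norm_sub_ofReal_mul_comm {z ζ : ℂ} (hz : ‖z‖ = 1) (hζ : ‖ζ‖ = 1) (r : ℝ) :
    ‖z - r * ζ‖ = ‖ζ - r * z‖ := by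
  have hz' := congrArg (· ^ 2) hz
  have hζ' := congrArg (· ^ 2) hζ
  simp only [Complex.sq_norm, Complex.normSq_apply, one_pow] at hz' hζ'
  rw [← sq_eq_sq₀ (norm_nonneg _) (norm_nonneg _)]
  simp only [Complex.sq_norm, Complex.normSq_apply, sub_re, sub_im, mul_re, mul_im, ofReal_re,
    ofReal_im]
  linear_combination (1 - r ^ 2) * (hz' - hζ')

theorem poissonKernel_zero_ofReal_mul_comm {z ζ : ℂ} (hz : ‖z‖ = 1) (hζ : ‖ζ‖ = 1) (r : ℝ) :
    poissonKernel 0 (r * ζ) z = poissonKernel 0 (r * z) ζ := by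
  simp only [poissonKernel, sub_zero, norm_mul, hz, hζ, norm_sub_ofReal_mul_comm hz hζ]

theorem circleAverage_fun_poissonKernel_of_norm_eq_one {z : ℂ} (hz : ‖z‖ = 1) {r : ℝ}
    (hr : |r| < 1) :
    Real.circleAverage (fun w ↦ poissonKernel 0 w z) 0 r = 1 := by
  calc Real.circleAverage (fun w ↦ poissonKernel 0 w z) 0 r
      = Real.circleAverage (poissonKernel 0 (r * z)) 0 1 := by
        simp only [Real.circleAverage_def, circleMap_zero, ofReal_one, one_mul]
        congr 2 with θ
        exact poissonKernel_zero_ofReal_mul_comm hz (norm_exp_ofReal_mul_I θ) r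
    _ = 1 := circleAverage_poissonKernel (by simpa [hz] using hr)

/-- Subharmonicity of `‖g‖ ^ p`: the Poisson formula followed by Jensen's inequality. -/
theorem DiffContOnCl.norm_rpow_le_circleAverage_poissonKernel_mul {E : Type*}
    [NormedAddCommGroup E] [NormedSpace ℂ E] [CompleteSpace E] {g : ℂ → E} {c w : ℂ} {R p : ℝ}
    (hp : 1 ≤ p) (hg : DiffContOnCl ℂ g (ball c R)) (hw : w ∈ ball c R) :
    ‖g w‖ ^ p ≤ Real.circleAverage (fun z ↦ poissonKernel c w z * ‖g z‖ ^ p) c R := by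
  have hR : 0 < R := pos_of_mem_ball hw
  have hsphere : ∀ θ, circleMap c R θ ∈ sphere c |R| := circleMap_mem_sphere' c R
  have hP_cont : ContinuousOn (poissonKernel c w) (sphere c |R|) := by
    rw [poissonKernel_eq_re_herglotzRieszKernel]
    exact continuous_re.comp_continuousOn (continuousOn_herglotzRieszKernel_sphere hw)
  have hP_nonneg : ∀ z ∈ sphere c |R|, 0 ≤ poissonKernel c w z := fun z hz ↦
    poissonKernel_nonneg (by
      rw [← dist_eq_norm, ← dist_eq_norm, mem_sphere.1 hz, abs_of_pos hR]
      exact (mem_ball.1 hw).le)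
  have hg_cont : ContinuousOn g (sphere c |R|) := hg.continuousOn.mono <| by
    rw [closure_ball c hR.ne', abs_of_pos hR]; exact sphere_subset_closedBall
  have hP_circ : Continuous fun θ ↦ poissonKernel c w (circleMap c R θ) :=
    hP_cont.comp_continuous (continuous_circleMap c R) hsphere
  have hg_circ : Continuous fun θ ↦ ‖g (circleMap c R θ)‖ :=
    (hg_cont.comp_continuous (continuous_circleMap c R) hsphere).norm
  have hnorm : ‖g w‖ ≤ Real.circleAverage (fun z ↦ poissonKernel c w z * ‖g z‖) c R := by
    calc ‖g w‖ = ‖Real.circleAverage (poissonKernel c w • g) c R‖ := by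
          rw [hg.circleAverage_poissonKernel_smul hw]
      _ ≤ _ := Real.norm_circleAverage_le _ _ _
      _ = _ := by
          refine Real.circleAverage_congr_sphere fun z hz ↦ ?_
          rw [Pi.smul_apply', norm_smul, Real.norm_of_nonneg (hP_nonneg z hz)]
  calc ‖g w‖ ^ p ≤ (Real.circleAverage (fun z ↦ poissonKernel c w z * ‖g z‖) c R) ^ p :=
        Real.rpow_le_rpow (norm_nonneg _) hnorm (by linarith)
    _ ≤ Real.circleAverage (fun z ↦ poissonKernel c w z * ‖g z‖ ^ p) c R := by
        simp only [Real.circleAverage_eq_setIntegral, ← mul_assoc]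
        refine rpow_integral_mul_le_integral_mul_rpow hp (fun θ ↦ ?_) (fun θ ↦ norm_nonneg _)
          ?_ ?_ ?_
        · exact mul_nonneg (by positivity) (hP_nonneg _ (hsphere θ))
        · rw [← Real.circleAverage_eq_setIntegral, circleAverage_poissonKernel hw]
        · exact ((continuous_const.mul hP_circ).mul hg_circ).integrableOn_Ioc
        · exact ((continuous_const.mul hP_circ).mul
            (hg_circ.rpow_const fun _ ↦ Or.inr (by linarith))).integrableOn_Ioc

theorem DiffContOnCl.circleAverage_norm_rpow_le {E : Type*} [NormedAddCommGroup E]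
    [NormedSpace ℂ E] [CompleteSpace E] {g : ℂ → E} {p r : ℝ} (hp : 1 ≤ p)
    (hg : DiffContOnCl ℂ g (ball 0 1)) (hr : |r| < 1) :
    Real.circleAverage (fun z ↦ ‖g z‖ ^ p) 0 r ≤ Real.circleAverage (fun z ↦ ‖g z‖ ^ p) 0 1 := by
  have hgp_cont : ContinuousOn (fun z ↦ ‖g z‖ ^ p) (closedBall 0 1) := by
    rw [← closure_ball 0 one_ne_zero]
    exact hg.continuousOn.norm.rpow_const fun _ _ ↦ Or.inr (by linarith)
  have hF : ContinuousOn (Function.uncurry fun w z ↦ poissonKernel 0 w z * ‖g z‖ ^ p)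
      (sphere 0 |r| ×ˢ sphere 0 |1|) := by
    refine ContinuousOn.mul ?_ (hgp_cont.comp continuousOn_snd fun x hx ↦ ?_)
    · simp only [poissonKernel]
      refine ContinuousOn.div (by fun_prop) (by fun_prop) fun x hx ↦ ?_
      have h1 : ‖x.1‖ < ‖x.2‖ := by
        rw [mem_sphere_zero_iff_norm.1 hx.1, mem_sphere_zero_iff_norm.1 hx.2, abs_one]
        exact hr
      have : x.2 - 0 - (x.1 - 0) ≠ 0 := by
        rw [sub_zero, sub_zero, sub_ne_zero]
        exact fun h ↦ h1.ne (by rw [h])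
      positivity
    · exact sphere_subset_closedBall (by simpa using hx.2)
  calc Real.circleAverage (fun z ↦ ‖g z‖ ^ p) 0 r
      ≤ Real.circleAverage
          (fun w ↦ Real.circleAverage (fun z ↦ poissonKernel 0 w z * ‖g z‖ ^ p) 0 1) 0 r := by
        refine Real.circleAverage_mono (hgp_cont.mono ?_).circleIntegrable'
          hF.circleIntegrable_circleAverage fun w hw ↦
            hg.norm_rpow_le_circleAverage_poissonKernel_mul hp ?_
        · exact sphere_subset_closedBall.trans (closedBall_subset_closedBall hr.le)
        · simpa [mem_sphere_zero_iff_norm.1 hw] using hr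
    _ = Real.circleAverage
          (fun z ↦ Real.circleAverage (fun w ↦ poissonKernel 0 w z * ‖g z‖ ^ p) 0 r) 0 1 :=
        Real.circleAverage_circleAverage_comm hF
    _ = Real.circleAverage (fun z ↦ ‖g z‖ ^ p) 0 1 := by
        refine Real.circleAverage_congr_sphere fun z hz ↦ ?_
        simp_rw [mul_comm _ (‖g z‖ ^ p), ← smul_eq_mul (a := ‖g z‖ ^ p)]
        rw [Real.circleAverage_fun_smul, smul_eq_mul,
          circleAverage_fun_poissonKernel_of_norm_eq_one (by simpa using hz) hr, mul_one]

theorem hIntegral_eq_circleAverage (p : ℝ) (f : ℂ → ℂ) (r : ℝ) :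
    hIntegral p f r = Real.circleAverage (fun z ↦ ‖f z‖ ^ p) 0 r := by
  simp [hIntegral, Real.circleAverage_def, circleMap_zero, one_div]

theorem hIntegral_pow_mul_one (p : ℝ) (f : ℂ → ℂ) (n : ℕ) :
    hIntegral p (fun z ↦ z ^ n * f z) 1 = hIntegral p f 1 := by
  rw [hIntegral_eq_circleAverage, hIntegral_eq_circleAverage]
  exact Real.circleAverage_congr_sphere fun z hz ↦ by
    simp [(by simpa using hz : ‖z‖ = 1)]

theorem hNormPow_eq_hIntegral_one {p : ℝ} (hp : 1 ≤ p) {f : ℂ → ℂ}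
    (hc : ContinuousOn f (closedBall 0 1)) (hd : DifferentiableOn ℂ f (ball 0 1)) :
    hNormPow p f = hIntegral p f 1 := by
  have hf : DiffContOnCl ℂ f (ball 0 1) := ⟨hd, by rwa [closure_ball 0 one_ne_zero]⟩
  have hcont : ContinuousOn (hIntegral p f) (Icc 0 1) := by
    simp only [funext (hIntegral_eq_circleAverage p f)]
    refine Real.ContinuousOn.circleAverage
      ((hc.norm.rpow_const fun _ _ ↦ Or.inr (by linarith)).mono fun z hz ↦ ?_) fun r hr ↦ hr.1
    simpa using hz.2
  refine IsLUB.csSup_eq ⟨?_, fun b hb ↦ ?_⟩ ((nonempty_Ioo.2 zero_lt_one).image _)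
  · rintro _ ⟨r, hr, rfl⟩
    rw [hIntegral_eq_circleAverage, hIntegral_eq_circleAverage]
    exact hf.circleAverage_norm_rpow_le hp (by rw [abs_of_pos hr.1]; exact hr.2)
  · refine ContinuousWithinAt.closure_le (by simp [closure_Ioo zero_ne_one])
      ((hcont 1 (right_mem_Icc.2 zero_le_one)).mono Ioo_subset_Icc_self) continuousWithinAt_const
      fun r hr ↦ hb ⟨r, hr, rfl⟩

theorem tendsto_ofReal_norm_pow_mul_rpow {z : ℂ} (hz : ‖z‖ ≤ 1) (a : ℂ) {p : ℝ} (hp : 0 < p) :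
    Tendsto (fun n : ℕ ↦ ENNReal.ofReal (‖z ^ n * a‖ ^ p)) atTop
      (𝓝 ((sphere 0 1).indicator (fun _ ↦ ENNReal.ofReal (‖a‖ ^ p)) z)) := by
  simp only [norm_mul, norm_pow]
  rcases hz.eq_or_lt with hz1 | hz1
  · rw [indicator_of_mem (by simpa using hz1)]
    simp [hz1]
  · rw [indicator_of_notMem (by simpa using hz1.ne)]
    have hcont : Continuous fun x : ℝ ↦ ENNReal.ofReal (x ^ p) :=
      ENNReal.continuous_ofReal.comp (Real.continuous_rpow_const hp.le)
    have h0 := (tendsto_pow_atTop_nhds_zero_of_lt_one (norm_nonneg z) hz1).mul_const ‖a‖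
    rw [zero_mul] at h0
    simpa [Real.zero_rpow hp.ne', Function.comp_def] using (hcont.tendsto 0).comp h0

theorem tendsto_lintegral_norm_pow_mul_rpow {μ : Measure ℂ} [IsFiniteMeasure μ]
    (hμ : μ (closedBall 0 1)ᶜ = 0) {f : ℂ → ℂ} (hf : ContinuousOn f (closedBall 0 1)) {p : ℝ}
    (hp : 0 < p) :
    Tendsto (fun n : ℕ ↦ ∫⁻ z, ENNReal.ofReal (‖z ^ n * f z‖ ^ p) ∂μ) atTop
      (𝓝 (∫⁻ z, ENNReal.ofReal (‖f z‖ ^ p) ∂μ.restrict (sphere 0 1))) := by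
  have hae : ∀ᵐ z ∂μ, z ∈ closedBall (0 : ℂ) 1 := mem_ae_iff.2 hμ
  have hμ_eq : μ.restrict (closedBall 0 1) = μ := Measure.restrict_eq_self_of_ae_mem hae
  obtain ⟨B, hB⟩ := (isCompact_closedBall (0 : ℂ) 1).exists_bound_of_continuousOn hf
  rw [← lintegral_indicator isClosed_sphere.measurableSet]
  refine tendsto_lintegral_of_dominated_convergence' (fun _ ↦ ENNReal.ofReal (B ^ p))
    (fun n ↦ ?_) (fun n ↦ ?_) ?_ ?_
  · rw [← hμ_eq]
    exact ((((continuous_pow n).continuousOn.mul hf).norm.rpow_const fun _ _ ↦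
      Or.inr hp.le).aemeasurable measurableSet_closedBall).ennreal_ofReal
  · filter_upwards [hae] with z hz
    have hz1 : ‖z‖ ≤ 1 := by simpa using hz
    gcongr
    rw [norm_mul, norm_pow]
    exact (mul_le_of_le_one_left (norm_nonneg _) (pow_le_one₀ (norm_nonneg z) hz1)).trans
      (hB z hz)
  · simp [ENNReal.mul_eq_top]
  · filter_upwards [hae] with z hz
    exact tendsto_ofReal_norm_pow_mul_rpow (by simpa using hz) (f z) hp

/-- If `μ` is a reverse Carleson measure for `H^p`, then so is its restriction to
the unit circle: the part of `μ` in the open disk can be dropped. -/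
theorem boundary_part_suffices (p : ℝ) (hp : 1 < p)
    (μ : Measure ℂ) [IsFiniteMeasure μ] (hsupp : μ (closedBall (0:ℂ) 1)ᶜ = 0)
    (hrev : ∃ C > (0:ℝ), ∀ f : ℂ → ℂ, ContinuousOn f (closedBall (0:ℂ) 1) →
      DifferentiableOn ℂ f (ball (0:ℂ) 1) →
      ENNReal.ofReal (C * hNormPow p f) ≤ ∫⁻ z, ENNReal.ofReal (‖f z‖ ^ p) ∂μ) :
    ∃ C' > (0:ℝ), ∀ f : ℂ → ℂ, ContinuousOn f (closedBall (0:ℂ) 1) →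
      DifferentiableOn ℂ f (ball (0:ℂ) 1) →
      ENNReal.ofReal (C' * hNormPow p f) ≤
        ∫⁻ z, ENNReal.ofReal (‖f z‖ ^ p) ∂(μ.restrict (sphere (0:ℂ) 1)) := by
  obtain ⟨C, hC, hrevC⟩ := hrev
  refine ⟨C, hC, fun f hfc hfd ↦ ?_⟩
  refine ge_of_tendsto' (tendsto_lintegral_norm_pow_mul_rpow hsupp hfc (by linarith)) fun n ↦ ?_
  have hfc_n : ContinuousOn (fun z ↦ z ^ n * f z) (closedBall 0 1) :=
    (continuous_pow n).continuousOn.mul hfc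
  have hfd_n : DifferentiableOn ℂ (fun z ↦ z ^ n * f z) (ball 0 1) :=
    (differentiable_pow n).differentiableOn.mul hfd
  have hnorm : hNormPow p (fun z ↦ z ^ n * f z) = hNormPow p f := by
    rw [hNormPow_eq_hIntegral_one hp.le hfc hfd, hNormPow_eq_hIntegral_one hp.le hfc_n hfd_n,
      hIntegral_pow_mul_one]
  exact hnorm ▸ hrevC _ hfc_n hfd_n
end

section
/- Let 1<p<∞, let I be an arc of the unit circle, and define φ_h(z) = (1/h)∫_{S_{I,h}} (1−|λ|²)^{p−1}/|1−conj(λ)z|^p dA(λ) for z in the closed unit disk, where dA is planar area measure. If z lies in the closed unit disk but not in the closure of I, then there exist δ>0, h₀>0 and a constant C>0 (depending on z, I and p) such that 0 ≤ φ_h(z) ≤ C·h^{p−1} for all 0<h<h₀; in particular φ_h(z) → 0 as h → 0. -/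
/-!
Since `z` is off the closure of `I`, it keeps a distance `δ > 0` from `I`. Writing `λ ∈ S_{I,h}`
as `λ = |λ| ω` with `ω ∈ I`, rotating by `ω` gives
`|1 - conj λ z| ≥ |ω - z| - |ω - λ| ≥ δ - h`, so for `h ≤ δ/2` the denominator of the integrand
is at least `(δ/2)^p`, while its numerator is at most `(2h)^{p-1}`. As `S_{I,h}` lies in an
annulus of area at most `2πh`, this gives `φ_h(z) ≤ 2π 2^{p-1} (δ/2)^{-p} h^{p-1}`.
-/

open MeasureTheory Complex Set Metric

noncomputable section
/-- `φ_h(z) = (1/h) ∫_{S_{I,h}} (1-|λ|²)^{p-1} / |1 - conj(λ) z|^p dA(λ)`, where `dA` is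
planar area (Lebesgue) measure and `I` is the arc at angle `a` of normalized length `ℓ`. -/
def cPhi (p a ℓ h : ℝ) (z : ℂ) : ℝ :=
  (1 / h) * ∫ l in cWindowH a ℓ h,
    (1 - ‖l‖ ^ 2) ^ (p - 1) / ‖1 - (starRingEnd ℂ) l * z‖ ^ p
end

open ComplexConjugate Filter Topology

noncomputable def phiKernel (p : ℝ) (z l : ℂ) : ℝ :=
  (1 - ‖l‖ ^ 2) ^ (p - 1) / ‖1 - conj l * z‖ ^ p

lemma cPhi_eq (p a ℓ h : ℝ) (z : ℂ) :
    cPhi p a ℓ h z = (1 / h) * ∫ l in cWindowH a ℓ h, phiKernel p z l := rfl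

lemma measurableSet_cArc (a : ℝ) {ℓ : ℝ} (hℓ : ℓ ≤ 1) : MeasurableSet (cArc a ℓ) := by
  have hmap : (fun θ : ℝ => Complex.exp (θ * Complex.I)) = circleMap 0 1 := by
    funext θ; simp [circleMap]
  rw [cArc, hmap]
  refine measurableSet_Ico.image_of_continuousOn_injOn (continuous_circleMap 0 1).continuousOn
    (injOn_circleMap_of_abs_sub_le' one_ne_zero ?_)
  nlinarith [Real.pi_pos]

lemma measurableSet_cWindowH (a : ℝ) {ℓ : ℝ} (hℓ : ℓ ≤ 1) (h : ℝ) :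
    MeasurableSet (cWindowH a ℓ h) :=
  (measurableSet_le measurable_const measurable_norm).inter
    ((measurableSet_le measurable_norm measurable_const).inter
      ((measurable_id.div (Complex.measurable_ofReal.comp measurable_norm))
        (measurableSet_cArc a hℓ)))

lemma cWindowH_subset_annulus (a ℓ h : ℝ) :
    cWindowH a ℓ h ⊆ closedBall (0 : ℂ) 1 \ ball 0 (1 - h) := fun _ ⟨hl, hl1, _⟩ =>
  ⟨mem_closedBall_zero_iff.2 hl1, fun h' => (mem_ball_zero_iff.1 h').not_ge hl⟩

lemma Complex.volume_closedBall_diff_ball (c : ℂ) {r R : ℝ} (hr : 0 ≤ r) (hrR : r ≤ R) :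
    volume (closedBall c R \ ball c r) = ENNReal.ofReal (Real.pi * (R ^ 2 - r ^ 2)) := by
  rw [measure_sdiff (ball_subset_closedBall.trans (closedBall_subset_closedBall hrR))
      measurableSet_ball.nullMeasurableSet measure_ball_lt_top.ne,
    Complex.volume_closedBall, Complex.volume_ball,
    ← ENNReal.sub_mul (fun _ _ => ENNReal.coe_ne_top), ← ENNReal.ofReal_pow hr,
    ← ENNReal.ofReal_pow (hr.trans hrR), ← ENNReal.ofReal_sub _ (by positivity),
    ← ENNReal.ofReal_coe_nnreal, NNReal.coe_real_pi, ← ENNReal.ofReal_mul (by nlinarith), mul_comm]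

lemma norm_sub_le_norm_one_sub_conj_mul_add_norm_sub {ω l z : ℂ} (hω : ‖ω‖ = 1) (hz : ‖z‖ ≤ 1) :
    ‖ω - z‖ ≤ ‖1 - conj l * z‖ + ‖ω - l‖ := by
  have hrot : ‖ω - z‖ = ‖1 - conj ω * z‖ := by
    have hωω : ω * conj ω = 1 := by
      rw [Complex.mul_conj, Complex.normSq_eq_norm_sq, hω]; norm_num
    calc ‖ω - z‖ = ‖ω * (1 - conj ω * z)‖ := by rw [mul_sub, ← mul_assoc, hωω]; ring_nf
      _ = ‖1 - conj ω * z‖ := by rw [norm_mul, hω, one_mul]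
  have hshift : ‖conj (ω - l) * z‖ ≤ ‖ω - l‖ := by
    rw [norm_mul, Complex.norm_conj]
    exact mul_le_of_le_one_right (norm_nonneg _) hz
  calc ‖ω - z‖ = ‖(1 - conj l * z) - conj (ω - l) * z‖ := by rw [hrot, map_sub]; ring_nf
    _ ≤ ‖1 - conj l * z‖ + ‖ω - l‖ := (norm_sub_le _ _).trans (by linarith)

lemma norm_div_norm_sub_self {l : ℂ} (hl : l ≠ 0) : ‖l / ‖l‖ - l‖ = |1 - ‖l‖| := by
  have hl_norm : (‖l‖ : ℂ) ≠ 0 := by exact_mod_cast norm_ne_zero_iff.2 hl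
  rw [show l / ‖l‖ - l = ((1 - ‖l‖ : ℝ) : ℂ) * (l / ‖l‖) by push_cast; field_simp, norm_mul,
    Complex.norm_real, Real.norm_eq_abs, norm_div, Complex.norm_real, Real.norm_eq_abs, abs_norm,
    div_self (norm_ne_zero_iff.2 hl), mul_one]

lemma sub_le_norm_one_sub_conj_mul_of_mem_cWindowH {a ℓ δ h : ℝ} {z l : ℂ}
    (hδ : ∀ w ∈ cArc a ℓ, δ ≤ dist z w) (hz : ‖z‖ ≤ 1) (h1 : h < 1)
    (hl : l ∈ cWindowH a ℓ h) : δ - h ≤ ‖1 - conj l * z‖ := by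
  obtain ⟨hlh, hl1, hω⟩ := hl
  have hl0 : l ≠ 0 := norm_pos_iff.1 (by linarith)
  have hωnorm : ‖l / ‖l‖‖ = 1 := by
    rw [norm_div, Complex.norm_real, Real.norm_eq_abs, abs_norm, div_self (norm_ne_zero_iff.2 hl0)]
  have hdist := hδ _ hω
  have htri := norm_sub_le_norm_one_sub_conj_mul_add_norm_sub (l := l) hωnorm hz
  rw [norm_div_norm_sub_self hl0, abs_of_nonneg (by linarith)] at htri
  rw [dist_eq_norm, norm_sub_rev] at hdist
  linarith

lemma phiKernel_nonneg (p : ℝ) (z : ℂ) {l : ℂ} (hl : ‖l‖ ≤ 1) : 0 ≤ phiKernel p z l := by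
  have : 0 ≤ 1 - ‖l‖ ^ 2 := by nlinarith [norm_nonneg l]
  unfold phiKernel; positivity

lemma phiKernel_le_of_mem_cWindowH {p a ℓ δ h : ℝ} {z l : ℂ} (hp : 1 < p)
    (hδ : ∀ w ∈ cArc a ℓ, δ ≤ dist z w) (hz : ‖z‖ ≤ 1) (h0 : 0 < h) (hhδ : h ≤ δ / 2) (h1 : h < 1)
    (hl : l ∈ cWindowH a ℓ h) : phiKernel p z l ≤ (2 * h) ^ (p - 1) / (δ / 2) ^ p := by
  have hden := sub_le_norm_one_sub_conj_mul_of_mem_cWindowH hδ hz h1 hl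
  obtain ⟨hlh, hl1, -⟩ := hl
  have hnum : 0 ≤ 1 - ‖l‖ ^ 2 := by nlinarith [norm_nonneg l]
  exact div_le_div₀ (by positivity)
    (Real.rpow_le_rpow hnum (by nlinarith) (by linarith)) (Real.rpow_pos_of_pos (by linarith) p)
    (Real.rpow_le_rpow (by linarith) (by linarith) (by linarith))

lemma cPhi_nonneg (p a : ℝ) {ℓ h : ℝ} (hℓ : ℓ ≤ 1) (h0 : 0 ≤ h) (z : ℂ) : 0 ≤ cPhi p a ℓ h z :=
  mul_nonneg (by positivity) (setIntegral_nonneg (measurableSet_cWindowH a hℓ h)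
    fun _ hl => phiKernel_nonneg p z hl.2.1)

lemma cPhi_le {p a ℓ δ h : ℝ} {z : ℂ} (hp : 1 < p) (hδ : ∀ w ∈ cArc a ℓ, δ ≤ dist z w)
    (hz : ‖z‖ ≤ 1) (h0 : 0 < h) (hhδ : h ≤ δ / 2) (h1 : h < 1) :
    cPhi p a ℓ h z ≤ 2 * Real.pi * (2 ^ (p - 1) / (δ / 2) ^ p) * h ^ (p - 1) := by
  set M := (2 * h) ^ (p - 1) / (δ / 2) ^ p with hM
  have hM0 : 0 ≤ M := div_nonneg (by positivity) (Real.rpow_nonneg (by linarith) p)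
  have hvol : volume (cWindowH a ℓ h) ≤ ENNReal.ofReal (2 * Real.pi * h) := by
    refine (measure_mono (cWindowH_subset_annulus a ℓ h)).trans ?_
    rw [Complex.volume_closedBall_diff_ball 0 (by linarith) (by linarith)]
    exact ENNReal.ofReal_le_ofReal (by nlinarith [mul_nonneg Real.pi_pos.le (sq_nonneg h)])
  have hint : ‖∫ l in cWindowH a ℓ h, phiKernel p z l‖ ≤ M * volume.real (cWindowH a ℓ h) :=
    norm_setIntegral_le_of_norm_le_const (hvol.trans_lt ENNReal.ofReal_lt_top) fun l hl => by
      rw [Real.norm_of_nonneg (phiKernel_nonneg p z hl.2.1)]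
      exact phiKernel_le_of_mem_cWindowH hp hδ hz h0 hhδ h1 hl
  have hvol' : volume.real (cWindowH a ℓ h) ≤ 2 * Real.pi * h :=
    ENNReal.toReal_le_of_le_ofReal (by positivity) hvol
  calc cPhi p a ℓ h z ≤ (1 / h) * (M * (2 * Real.pi * h)) := by
        rw [cPhi_eq]; gcongr
        exact (le_abs_self _).trans (hint.trans (by gcongr))
    _ = 2 * Real.pi * (2 ^ (p - 1) / (δ / 2) ^ p) * h ^ (p - 1) := by
        rw [hM, Real.mul_rpow zero_le_two h0.le]; field_simp

lemma tendsto_nhdsGT_zero_of_nonneg_of_le_mul_rpow {f : ℝ → ℝ} {C q h₀ : ℝ} (hq : 0 < q)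
    (hh₀ : 0 < h₀) (hf : ∀ h, 0 < h → h < h₀ → 0 ≤ f h ∧ f h ≤ C * h ^ q) :
    Tendsto f (𝓝[>] 0) (𝓝 0) := by
  have hbound : Tendsto (fun h : ℝ => C * h ^ q) (𝓝[>] 0) (𝓝 0) := by
    simpa [Real.zero_rpow hq.ne'] using
      ((Real.continuousAt_rpow_const 0 q (Or.inr hq.le)).tendsto.const_mul C).mono_left
        nhdsWithin_le_nhds
  have hsmall : ∀ᶠ h in 𝓝[>] 0, 0 ≤ f h ∧ f h ≤ C * h ^ q := by
    filter_upwards [Ioo_mem_nhdsGT hh₀] with h hh using hf h hh.1 hh.2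
  exact tendsto_of_tendsto_of_tendsto_of_le_of_le' tendsto_const_nhds hbound
    (hsmall.mono fun _ => And.left) (hsmall.mono fun _ => And.right)

theorem phi_decay_off_arc_general (p : ℝ) (hp : 1 < p) (a ℓ : ℝ) (hℓ1 : ℓ ≤ 1)
    (z : ℂ) (hz : z ∈ closedBall (0:ℂ) 1) (hzI : z ∉ closure (cArc a ℓ)) :
    ∃ δ > (0:ℝ), ∃ h₀ > (0:ℝ), ∃ C > (0:ℝ),
      (∀ h : ℝ, 0 < h → h < h₀ →
        0 ≤ cPhi p a ℓ h z ∧ cPhi p a ℓ h z ≤ C * h ^ (p - 1)) ∧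
      Filter.Tendsto (fun h : ℝ => cPhi p a ℓ h z) (nhdsWithin 0 (Ioi 0)) (nhds 0) := by
  obtain ⟨δ, hδ0, hδ⟩ : ∃ δ > 0, ∀ w ∈ cArc a ℓ, δ ≤ dist z w := by
    simpa [Metric.mem_closure_iff] using hzI
  have hbound : ∀ h : ℝ, 0 < h → h < min (δ / 2) 1 → 0 ≤ cPhi p a ℓ h z ∧
      cPhi p a ℓ h z ≤ 2 * Real.pi * (2 ^ (p - 1) / (δ / 2) ^ p) * h ^ (p - 1) :=
    fun h h0 hh => ⟨cPhi_nonneg p a hℓ1 h0.le z, cPhi_le hp hδ (mem_closedBall_zero_iff.1 hz) h0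
      (hh.le.trans (min_le_left _ _)) (hh.trans_le (min_le_right _ _))⟩
  exact ⟨δ, hδ0, _, by positivity, _, by positivity, hbound,
    tendsto_nhdsGT_zero_of_nonneg_of_le_mul_rpow (by linarith) (by positivity) hbound⟩

/-- If `z` is in the closed disk but not in the closure of the arc `I`, then
`0 ≤ φ_h(z) ≤ C h^{p-1}` for all small `h`; in particular `φ_h(z) → 0` as `h → 0⁺`. -/
theorem phi_decay_off_arc (p : ℝ) (hp : 1 < p) (a ℓ : ℝ) (hℓ : 0 < ℓ) (hℓ1 : ℓ ≤ 1)
    (z : ℂ) (hz : z ∈ closedBall (0:ℂ) 1) (hzI : z ∉ closure (cArc a ℓ)) :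
    ∃ δ > (0:ℝ), ∃ h₀ > (0:ℝ), ∃ C > (0:ℝ),
      (∀ h : ℝ, 0 < h → h < h₀ →
        0 ≤ cPhi p a ℓ h z ∧ cPhi p a ℓ h z ≤ C * h ^ (p - 1)) ∧
      Filter.Tendsto (fun h : ℝ => cPhi p a ℓ h z) (nhdsWithin 0 (Ioi 0)) (nhds 0) :=
  phi_decay_off_arc_general p hp a ℓ hℓ1 z hz hzI
end

section
/- Let 1<p<∞ and let μ be a positive finite Borel measure on the closed unit disk such that for some C₂>0, ∫_{closed 𝔻} |K_λ|^p dμ ≥ C₂ for every λ in the open unit disk. Then there exists c>0 (depending only on p and C₂) such that for every arc I of the unit circle and every 0<h≤|I|, ∫_{closed 𝔻} φ_h(z) dμ(z) ≥ c·|I|, where φ_h(z) = (1/h)∫_{S_{I,h}} (1−|λ|²)^{p−1}/|1−conj(λ)z|^p dA(λ) and dA is planar area measure. -/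
open MeasureTheory Complex Set Metric

/-!
Testing the `H^p` norm of `k_λ` on the circle of radius `(1 + |λ|)/2`, where `|k_λ| ≳ (1 - |λ|)⁻¹`
on an arc of length `1 - |λ|`, gives `‖k_λ‖_p^p ≳ (1 - |λ|)^(1-p)`. Hence the hypothesis yields
`∫ (1 - |λ|²)^(p-1) |k_λ|^p dμ ≳ C₂` for every `λ ∈ 𝔻`. Integrating over `λ ∈ S_{I,h}` and
exchanging the integrals (Tonelli) gives `∫ φ_h dμ ≳ C₂ |S_{I,h}| / h`, and `|S_{I,h}| ≳ h |I|` in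
polar coordinates. For `φ_h` to be a genuine integral one uses that its integrand is
`O(|z - λ|⁻¹)`, which is locally integrable in the plane.
-/

noncomputable section

/-- `(1 - |λ|²)^(p-1) |k_λ(z)|^p`, the integrand of `φ_h`. -/
def weightedKernelPow (p : ℝ) (l z : ℂ) : ℝ :=
  (1 - ‖l‖ ^ 2) ^ (p - 1) / ‖1 - (starRingEnd ℂ) l * z‖ ^ p

lemma normSq_one_sub_conj_mul (l z : ℂ) :
    normSq (1 - (starRingEnd ℂ) l * z) = normSq (z - l) + (1 - normSq l) * (1 - normSq z) := by
  simp only [normSq_apply, sub_re, sub_im, mul_re, mul_im, conj_re, conj_im, one_re, one_im]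
  ring

lemma norm_sub_le_norm_one_sub_conj_mul {l z : ℂ} (hl : ‖l‖ ≤ 1) (hz : ‖z‖ ≤ 1) :
    ‖z - l‖ ≤ ‖1 - (starRingEnd ℂ) l * z‖ := by
  have hl' : normSq l ≤ 1 := by rw [← Complex.sq_norm]; nlinarith [norm_nonneg l]
  have hz' : normSq z ≤ 1 := by rw [← Complex.sq_norm]; nlinarith [norm_nonneg z]
  rw [norm_def, norm_def, normSq_one_sub_conj_mul]
  exact Real.sqrt_le_sqrt (by nlinarith)

lemma one_sub_norm_le_norm_one_sub_conj_mul (l : ℂ) {z : ℂ} (hz : ‖z‖ ≤ 1) :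
    1 - ‖l‖ ≤ ‖1 - (starRingEnd ℂ) l * z‖ := by
  have h₁ : ‖(starRingEnd ℂ) l * z‖ ≤ ‖l‖ := by
    rw [norm_mul, norm_conj]
    exact mul_le_of_le_one_right (norm_nonneg l) hz
  have h₂ := norm_sub_norm_le (1 : ℂ) ((starRingEnd ℂ) l * z)
  rw [norm_one] at h₂
  linarith

lemma weightedKernelPow_nonneg (p : ℝ) {l : ℂ} (hl : ‖l‖ ≤ 1) (z : ℂ) :
    0 ≤ weightedKernelPow p l z := by
  unfold weightedKernelPow
  have : 0 ≤ 1 - ‖l‖ ^ 2 := by nlinarith [norm_nonneg l]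
  positivity

lemma weightedKernelPow_le {p : ℝ} (hp : 1 ≤ p) {l z : ℂ} (hl : ‖l‖ ≤ 1) (hz : ‖z‖ ≤ 1)
    (hlz : l ≠ z) : weightedKernelPow p l z ≤ 2 ^ (p - 1) * ‖z - l‖⁻¹ := by
  set D := ‖1 - (starRingEnd ℂ) l * z‖
  have hd : 0 < ‖z - l‖ := norm_pos_iff.mpr (sub_ne_zero.mpr hlz.symm)
  have hdD : ‖z - l‖ ≤ D := norm_sub_le_norm_one_sub_conj_mul hl hz
  have hD : 0 < D := hd.trans_le hdD
  have hnum : (1 - ‖l‖ ^ 2) ^ (p - 1) ≤ (2 * D) ^ (p - 1) := by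
    have := one_sub_norm_le_norm_one_sub_conj_mul l hz
    exact Real.rpow_le_rpow (by nlinarith [norm_nonneg l]) (by nlinarith [norm_nonneg l])
      (by linarith)
  calc weightedKernelPow p l z ≤ (2 * D) ^ (p - 1) / D ^ p := by
        unfold weightedKernelPow; gcongr
    _ = 2 ^ (p - 1) * D⁻¹ := by
        rw [Real.mul_rpow zero_le_two hD.le, Real.rpow_sub_one hD.ne']
        field_simp
    _ ≤ 2 ^ (p - 1) * ‖z - l‖⁻¹ := by gcongr

lemma norm_one_sub_mul_exp_le {t : ℝ} (ht₀ : 0 ≤ t) (ht₁ : t ≤ 1) (s : ℝ) :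
    ‖1 - t * exp (s * I)‖ ≤ (1 - t) + |s| := by
  have hsplit : (1 : ℂ) - t * exp (s * I) = ((1 - t : ℝ) : ℂ) - t * (exp (I * s) - 1) := by
    push_cast; ring_nf
  have hexp : ‖exp (I * s) - 1‖ ≤ |s| := Real.norm_exp_I_mul_ofReal_sub_one_le
  rw [hsplit]
  refine (norm_sub_le _ _).trans ?_
  rw [norm_real, Real.norm_of_nonneg (by linarith), norm_mul, norm_real, Real.norm_of_nonneg ht₀]
  nlinarith [norm_nonneg (exp (I * s) - 1)]

lemma conj_mul_exp_arg_add_mul_I (l : ℂ) (s : ℝ) :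
    (starRingEnd ℂ) l * exp ((l.arg + s : ℝ) * I) = ‖l‖ * exp (s * I) := by
  nth_rewrite 1 [← norm_mul_exp_arg_mul_I l]
  rw [map_mul, conj_ofReal, ← exp_conj, mul_assoc, ← exp_add]
  congr 2
  simp only [map_mul, conj_ofReal, conj_I]
  push_cast; ring

lemma measurable_weightedKernelPow (p : ℝ) :
    Measurable (fun q : ℂ × ℂ => weightedKernelPow p q.1 q.2) := by
  unfold weightedKernelPow
  fun_prop

lemma measurable_weightedKernelPow_left (p : ℝ) (z : ℂ) :
    Measurable (fun l => weightedKernelPow p l z) := by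
  unfold weightedKernelPow
  fun_prop

lemma hIntegral_nonneg (p : ℝ) (f : ℂ → ℂ) (r : ℝ) : 0 ≤ hIntegral p f r := by
  unfold hIntegral
  have := Real.pi_pos
  exact mul_nonneg (by positivity)
    (intervalIntegral.integral_nonneg (by positivity) fun _ _ => by positivity)

lemma hIntegral_le_hNormPow {p : ℝ} {f : ℂ → ℂ} (hf : 0 < hNormPow p f) {r : ℝ}
    (hr : r ∈ Ioo (0 : ℝ) 1) : hIntegral p f r ≤ hNormPow p f := by
  have hbdd : BddAbove (hIntegral p f '' Ioo 0 1) := by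
    by_contra h
    exact hf.ne' (Real.sSup_of_not_bddAbove h)
  exact le_csSup hbdd (mem_image_of_mem _ hr)

/-- A lower bound `C ≤ ∫ |f / ‖f‖_p|^p dμ` forces `‖f‖_p > 0`, since `‖f‖_p = 0` (also the junk
value for `f ∉ H^p`) makes the normalized function vanish. -/
lemma hNormPow_pos_and_le_lintegral {p : ℝ} (hp : 0 < p) {f : ℂ → ℂ} (μ : Measure ℂ)
    {C : ℝ} (hC : 0 < C)
    (hf : ENNReal.ofReal C ≤ ∫⁻ z, ENNReal.ofReal (‖f z / (hNorm p f : ℂ)‖ ^ p) ∂μ) :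
    0 < hNormPow p f ∧
      ENNReal.ofReal (C * hNormPow p f) ≤ ∫⁻ z, ENNReal.ofReal (‖f z‖ ^ p) ∂μ := by
  set N := hNormPow p f
  have hN₀ : 0 ≤ N := Real.sSup_nonneg (by rintro _ ⟨r, -, rfl⟩; exact hIntegral_nonneg p f r)
  have hN : 0 < N := by
    refine hN₀.lt_of_ne fun hN => ?_
    have : hNorm p f = 0 := by
      rw [hNorm, show hNormPow p f = 0 from hN.symm, Real.zero_rpow (by positivity)]
    simp [this, Real.zero_rpow hp.ne'] at hf
    linarith
  refine ⟨hN, ?_⟩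
  have hpt : ∀ z, ENNReal.ofReal (‖f z‖ ^ p)
      = ENNReal.ofReal N * ENNReal.ofReal (‖f z / (hNorm p f : ℂ)‖ ^ p) := fun z => by
    rw [← ENNReal.ofReal_mul hN₀, norm_div, norm_real, Real.norm_of_nonneg (by
      unfold hNorm; positivity), Real.div_rpow (norm_nonneg _) (by unfold hNorm; positivity),
      hNorm, one_div, Real.rpow_inv_rpow hN₀ hp.ne']
    field_simp
  rw [lintegral_congr hpt, lintegral_const_mul' _ _ ENNReal.ofReal_ne_top, mul_comm C,
    ENNReal.ofReal_mul hN₀]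
  gcongr

lemma norm_hker (l z : ℂ) : ‖hker l z‖ = ‖1 - (starRingEnd ℂ) l * z‖⁻¹ := by
  rw [hker, norm_div, norm_one, one_div]

/-- On the circle of radius `(1 + |λ|)/2`, `|k_λ| ≥ 1/(3(1 - |λ|))` on an arc of length `1 - |λ|`
starting at `arg λ`. -/
lemma hIntegral_hker_ge {p : ℝ} (hp : 0 ≤ p) {l : ℂ} (hl : ‖l‖ < 1) :
    (3 : ℝ) ^ (-p) * (1 - ‖l‖) ^ (1 - p) / (2 * Real.pi)
      ≤ hIntegral p (hker l) ((1 + ‖l‖) / 2) := by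
  set δ := 1 - ‖l‖
  set r := (1 + ‖l‖) / 2
  have hδ : 0 < δ := by simp only [δ]; linarith
  have hδ₁ : δ ≤ 1 := by simp only [δ]; linarith [norm_nonneg l]
  have hπ := Real.pi_gt_three
  set f : ℝ → ℝ := fun θ => ‖hker l ((r : ℂ) * exp (θ * I))‖ ^ p
  have hD : ∀ θ : ℝ, δ ≤ ‖1 - (starRingEnd ℂ) l * ((r : ℂ) * exp (θ * I))‖ := fun θ => by
    refine one_sub_norm_le_norm_one_sub_conj_mul l ?_
    rw [norm_mul, norm_exp_ofReal_mul_I, norm_real, Real.norm_of_nonneg (by positivity)]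
    simp only [r]; linarith
  have hf_cont : Continuous f := by
    refine Continuous.rpow_const (Continuous.norm ?_) fun _ => Or.inr hp
    refine continuous_const.div (by fun_prop) fun θ => ?_
    exact norm_pos_iff.mp (hδ.trans_le (hD θ))
  have hf_per : Function.Periodic f (2 * Real.pi) := fun θ => by
    simp only [f, ofReal_add, add_mul, exp_add, ofReal_mul, ofReal_ofNat, exp_two_pi_mul_I,
      mul_one]
  have hf_ge : ∀ θ ∈ Icc l.arg (l.arg + δ), ((3 * δ)⁻¹) ^ p ≤ f θ := by
    rintro θ ⟨hθ₀, hθ₁⟩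
    obtain ⟨s, rfl⟩ : ∃ s, θ = l.arg + s := ⟨θ - l.arg, by ring⟩
    have hrot : (starRingEnd ℂ) l * ((r : ℂ) * exp ((l.arg + s : ℝ) * I))
        = ((‖l‖ * r : ℝ) : ℂ) * exp (s * I) := by
      rw [mul_left_comm, conj_mul_exp_arg_add_mul_I]; push_cast; ring
    have hle : ‖1 - (starRingEnd ℂ) l * ((r : ℂ) * exp ((l.arg + s : ℝ) * I))‖ ≤ 3 * δ := by
      rw [hrot]
      refine (norm_one_sub_mul_exp_le (by positivity) ?_ s).trans ?_
      · simp only [r]; nlinarith [norm_nonneg l]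
      · rw [abs_of_nonneg (by linarith)]
        simp only [r, δ] at hθ₁ ⊢; nlinarith [norm_nonneg l]
    simp only [f, norm_hker]
    exact Real.rpow_le_rpow (by positivity) (inv_anti₀ (hδ.trans_le (hD _)) hle) hp
  have hsub : δ * ((3 * δ)⁻¹) ^ p ≤ ∫ θ in l.arg..l.arg + 2 * Real.pi, f θ := calc
    δ * ((3 * δ)⁻¹) ^ p = ∫ _ in l.arg..l.arg + δ, ((3 * δ)⁻¹) ^ p := by simp
    _ ≤ ∫ θ in l.arg..l.arg + δ, f θ :=
        intervalIntegral.integral_mono_on (by linarith) intervalIntegrable_const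
          (hf_cont.intervalIntegrable _ _) hf_ge
    _ ≤ ∫ θ in l.arg..l.arg + 2 * Real.pi, f θ :=
        intervalIntegral.integral_mono_interval le_rfl (by linarith) (by linarith)
          (Filter.Eventually.of_forall fun _ => by positivity) (hf_cont.intervalIntegrable _ _)
  have hconst : δ * ((3 * δ)⁻¹) ^ p = (3 : ℝ) ^ (-p) * δ ^ (1 - p) := by
    rw [Real.inv_rpow (by positivity), Real.mul_rpow (by norm_num) hδ.le, Real.rpow_neg
      (by norm_num), Real.rpow_sub hδ, Real.rpow_one]
    field_simp
  have hper := hf_per.intervalIntegral_add_eq l.arg 0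
  rw [zero_add] at hper
  rw [hIntegral, ← hconst, div_eq_mul_inv, mul_comm, one_div]
  exact mul_le_mul_of_nonneg_left (hsub.trans_eq hper) (by positivity)

lemma one_le_one_sub_sq_rpow_mul_one_sub_rpow {p x : ℝ} (hp : 1 ≤ p) (hx₀ : 0 ≤ x)
    (hx₁ : x < 1) : 1 ≤ (1 - x ^ 2) ^ (p - 1) * (1 - x) ^ (1 - p) := by
  have h : 0 < 1 - x := by linarith
  rw [show 1 - x ^ 2 = (1 + x) * (1 - x) by ring, Real.mul_rpow (by linarith) h.le, mul_assoc,
    ← Real.rpow_add h, show p - 1 + (1 - p) = 0 by ring, Real.rpow_zero, mul_one]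
  exact Real.one_le_rpow (by linarith) (by linarith)

lemma ofReal_le_lintegral_weightedKernelPow {p : ℝ} (hp : 1 ≤ p) (μ : Measure ℂ) {C : ℝ}
    (hC : 0 < C) {l : ℂ} (hl : ‖l‖ < 1)
    (hK : ENNReal.ofReal C ≤ ∫⁻ z, ENNReal.ofReal (‖hkerN p l z‖ ^ p) ∂μ) :
    ENNReal.ofReal (C * ((3 : ℝ) ^ (-p) / (2 * Real.pi)))
      ≤ ∫⁻ z, ENNReal.ofReal (weightedKernelPow p l z) ∂μ := by
  obtain ⟨hN, hle⟩ := hNormPow_pos_and_le_lintegral (by linarith) μ hC hK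
  have hnorm : (3 : ℝ) ^ (-p) * (1 - ‖l‖) ^ (1 - p) / (2 * Real.pi) ≤ hNormPow p (hker l) :=
    (hIntegral_hker_ge (by linarith) hl).trans
      (hIntegral_le_hNormPow hN ⟨by positivity, by linarith⟩)
  have hw₀ : 0 ≤ (1 - ‖l‖ ^ 2) ^ (p - 1) := Real.rpow_nonneg (by nlinarith [norm_nonneg l]) _
  have hw : ∀ z, ENNReal.ofReal (weightedKernelPow p l z)
      = ENNReal.ofReal ((1 - ‖l‖ ^ 2) ^ (p - 1)) * ENNReal.ofReal (‖hker l z‖ ^ p) := fun z => by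
    rw [← ENNReal.ofReal_mul hw₀, weightedKernelPow, norm_hker, Real.inv_rpow (norm_nonneg _),
      div_eq_mul_inv]
  have hkey := one_le_one_sub_sq_rpow_mul_one_sub_rpow hp (norm_nonneg l) hl
  rw [lintegral_congr hw, lintegral_const_mul' _ _ ENNReal.ofReal_ne_top]
  calc ENNReal.ofReal (C * ((3 : ℝ) ^ (-p) / (2 * Real.pi)))
      ≤ ENNReal.ofReal ((1 - ‖l‖ ^ 2) ^ (p - 1) * (C * hNormPow p (hker l))) := by
        refine ENNReal.ofReal_le_ofReal ?_
        calc C * ((3 : ℝ) ^ (-p) / (2 * Real.pi))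
            ≤ C * ((3 : ℝ) ^ (-p) / (2 * Real.pi))
              * ((1 - ‖l‖ ^ 2) ^ (p - 1) * (1 - ‖l‖) ^ (1 - p)) := le_mul_of_one_le_right
                (by positivity) hkey
          _ = (1 - ‖l‖ ^ 2) ^ (p - 1) * (C * ((3 : ℝ) ^ (-p) * (1 - ‖l‖) ^ (1 - p)
              / (2 * Real.pi))) := by ring
          _ ≤ _ := by gcongr
    _ = ENNReal.ofReal ((1 - ‖l‖ ^ 2) ^ (p - 1)) * ENNReal.ofReal (C * hNormPow p (hker l)) :=
        ENNReal.ofReal_mul hw₀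
    _ ≤ _ := by gcongr

lemma integrableOn_inv_norm_sub {s : Set ℂ} (hs : IsCompact s) (z : ℂ) :
    IntegrableOn (fun l => ‖z - l‖⁻¹) s := by
  have hloc : LocallyIntegrable (fun w : ℂ => ‖w‖⁻¹) volume := by
    refine locallyIntegrable_of_norm_le_rpow (C := 1) (α := 1) (by simp) (by simp)
      (Filter.Eventually.of_forall fun w => ?_) (by fun_prop)
    simp [Real.rpow_neg_one]
  have hsub := Measure.measurePreserving_sub_left volume z
  exact (hsub.integrableOn_image (Homeomorph.subLeft z).measurableEmbedding).mp
    (hloc.integrableOn_isCompact (hs.image (continuous_sub_left z)))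

lemma integrableOn_weightedKernelPow {p : ℝ} (hp : 1 ≤ p) {z : ℂ} (hz : ‖z‖ ≤ 1) {s : Set ℂ}
    (hs : s ⊆ closedBall 0 1) : IntegrableOn (fun l => weightedKernelPow p l z) s := by
  refine IntegrableOn.mono_set ?_ hs
  refine ((integrableOn_inv_norm_sub (isCompact_closedBall 0 1) z).const_mul (2 ^ (p - 1))).mono'
    (measurable_weightedKernelPow_left p z).aestronglyMeasurable ?_
  filter_upwards [ae_restrict_mem measurableSet_closedBall,
    ae_restrict_of_ae (Measure.ae_ne volume z)] with l hl hlz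
  rw [mem_closedBall_zero_iff] at hl
  rw [Real.norm_of_nonneg (weightedKernelPow_nonneg p hl z)]
  exact weightedKernelPow_le hp hl hz hlz

lemma cWindowH_subset_closedBall (a ℓ h : ℝ) : cWindowH a ℓ h ⊆ closedBall 0 1 :=
  fun _ hz => mem_closedBall_zero_iff.mpr hz.2.1

lemma ofReal_cPhi_eq {p : ℝ} (hp : 1 ≤ p) (a ℓ : ℝ) {h : ℝ} (hh : 0 < h) {z : ℂ} (hz : ‖z‖ ≤ 1) :
    ENNReal.ofReal (cPhi p a ℓ h z)
      = ENNReal.ofReal (1 / h) * ∫⁻ l in cWindowH a ℓ h, ENNReal.ofReal (weightedKernelPow p l z) := by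
  have hW := cWindowH_subset_closedBall a ℓ h
  rw [cPhi, ENNReal.ofReal_mul (by positivity)]
  congr 1
  refine ofReal_integral_eq_lintegral_ofReal (integrableOn_weightedKernelPow hp hz hW) ?_
  filter_upwards [ae_restrict_of_ae_restrict_of_subset hW
    (ae_restrict_mem measurableSet_closedBall)] with l hl
  exact weightedKernelPow_nonneg p (mem_closedBall_zero_iff.mp hl) z

lemma ofReal_mul_exp_mem_cWindowH {a ℓ h r θ : ℝ} (hr₀ : 0 < r) (hr : r ∈ Icc (1 - h) 1)
    (hθ : θ ∈ Ico a (a + 2 * Real.pi * ℓ)) : (r : ℂ) * exp (θ * I) ∈ cWindowH a ℓ h := by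
  have hnorm : ‖(r : ℂ) * exp (θ * I)‖ = r := by
    rw [norm_mul, norm_exp_ofReal_mul_I, norm_real, Real.norm_of_nonneg hr₀.le, mul_one]
  refine ⟨?_, ?_, θ, hθ, ?_⟩ <;> rw [hnorm]
  exacts [hr.1, hr.2, (mul_div_cancel_left₀ _ (ofReal_ne_zero.mpr hr₀.ne')).symm]

lemma volume_cWindowH_ge {a ℓ h : ℝ} (hℓ₁ : ℓ ≤ 1) (hh : 0 ≤ h) (hh₁ : h ≤ 1) :
    ENNReal.ofReal (Real.pi * ℓ * h / 2) ≤ volume (cWindowH a ℓ h) := by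
  have hπ := Real.pi_pos
  set A : Set ℂ := {z | ‖z‖ ∈ Ioc (1 - h / 2) 1 ∧ z.arg ∈ Ioo (-(Real.pi * ℓ)) (Real.pi * ℓ)}
  set R : Set (ℝ × ℝ) := Ioc (1 - h / 2) 1 ×ˢ Ioo (-(Real.pi * ℓ)) (Real.pi * ℓ)
  have hA : MeasurableSet A :=
    (measurableSet_Ioc.preimage measurable_norm).inter (measurableSet_Ioo.preimage measurable_arg)
  have hRtarget : R ⊆ polarCoord.target := fun q hq =>
    ⟨mem_Ioi.mpr (by linarith [hq.1.1]), by nlinarith [hq.2.1], by nlinarith [hq.2.2]⟩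
  have hRA : ∀ q ∈ R, Complex.polarCoord.symm q ∈ A := by
    rintro q hq
    have := Complex.polarCoord.right_inv (hRtarget hq)
    obtain ⟨hnorm, harg⟩ := Prod.ext_iff.mp ((Complex.polarCoord_apply _).symm.trans this)
    dsimp only at hnorm harg
    exact ⟨hnorm ▸ hq.1, harg ▸ hq.2⟩
  -- `A` is a polar rectangle centred on the positive axis; `ρ` rotates it into `S_{I,h}`
  set ρ := rotation (Circle.exp (a + Real.pi * ℓ))
  have hAW : A ⊆ ρ ⁻¹' cWindowH a ℓ h := by
    rintro z ⟨hz, harg⟩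
    have hz₀ : 0 < ‖z‖ := by linarith [hz.1]
    have : ρ z = (‖z‖ : ℂ) * exp (((a + Real.pi * ℓ + z.arg : ℝ)) * I) := by
      nth_rewrite 1 [← norm_mul_exp_arg_mul_I z]
      rw [rotation_apply, Circle.coe_exp]
      push_cast
      simp only [add_mul, exp_add]
      ring
    rw [mem_preimage, this]
    exact ofReal_mul_exp_mem_cWindowH hz₀ ⟨by linarith [hz.1], hz.2⟩
      ⟨by linarith [harg.1], by linarith [harg.2]⟩
  calc ENNReal.ofReal (Real.pi * ℓ * h / 2)
      = ENNReal.ofReal (1 / 2) * volume R := by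
        rw [Measure.volume_eq_prod, Measure.prod_prod, Real.volume_Ioc, Real.volume_Ioo,
          ← ENNReal.ofReal_mul (by linarith), ← ENNReal.ofReal_mul (by norm_num)]
        ring_nf
    _ = ∫⁻ _ in R, ENNReal.ofReal (1 / 2) := (setLIntegral_const _ _).symm
    _ ≤ ∫⁻ q in R, ENNReal.ofReal q.1 • A.indicator 1 (Complex.polarCoord.symm q) := by
        refine setLIntegral_mono' (measurableSet_Ioc.prod measurableSet_Ioo) fun q hq => ?_
        rw [indicator_of_mem (hRA q hq), Pi.one_apply, smul_eq_mul, mul_one]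
        exact ENNReal.ofReal_le_ofReal (by linarith [hq.1.1])
    _ ≤ ∫⁻ q in polarCoord.target, ENNReal.ofReal q.1 • A.indicator 1 (Complex.polarCoord.symm q) :=
        lintegral_mono_set hRtarget
    _ = volume A := by rw [Complex.lintegral_comp_polarCoord_symm, lintegral_indicator_one hA]
    _ ≤ volume (ρ ⁻¹' cWindowH a ℓ h) := measure_mono hAW
    _ ≤ Measure.map ρ volume (cWindowH a ℓ h) :=
        Measure.le_map_apply ρ.continuous.measurable.aemeasurable _
    _ = volume (cWindowH a ℓ h) := by rw [ρ.measurePreserving.map_eq]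

lemma ae_restrict_norm_lt_one {s : Set ℂ} (hs : s ⊆ closedBall 0 1) :
    ∀ᵐ l ∂volume.restrict s, ‖l‖ < 1 := by
  have hsphere : ∀ᵐ l : ℂ, l ∉ sphere 0 1 :=
    measure_eq_zero_iff_ae_notMem.mp (Measure.addHaar_sphere volume 0 1)
  filter_upwards [ae_restrict_of_ae_restrict_of_subset hs
    (ae_restrict_mem measurableSet_closedBall), ae_restrict_of_ae hsphere] with l hl hl'
  rw [mem_closedBall_zero_iff] at hl
  rw [mem_sphere_zero_iff_norm] at hl'
  exact hl.lt_of_ne hl'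

end

/-- If the reverse inequality holds on normalized reproducing kernels, then
`∫ φ_h dμ ≳ |I|` uniformly over arcs `I` and `0 < h ≤ |I|`. -/
theorem phi_integral_lower_bound (p : ℝ) (hp : 1 < p)
    (μ : Measure ℂ) [IsFiniteMeasure μ] (hsupp : μ (closedBall (0:ℂ) 1)ᶜ = 0)
    (C₂ : ℝ) (hC₂ : 0 < C₂)
    (hker : ∀ l ∈ ball (0:ℂ) 1,
      ENNReal.ofReal C₂ ≤ ∫⁻ z, ENNReal.ofReal (‖hkerN p l z‖ ^ p) ∂μ) :
    ∃ c > (0:ℝ), ∀ a ℓ h : ℝ, 0 < ℓ → ℓ ≤ 1 → 0 < h → h ≤ ℓ →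
      ENNReal.ofReal (c * ℓ) ≤ ∫⁻ z, ENNReal.ofReal (cPhi p a ℓ h z) ∂μ := by
  set κ := C₂ * ((3 : ℝ) ^ (-p) / (2 * Real.pi))
  have hπ := Real.pi_pos
  refine ⟨κ * (Real.pi / 2), by positivity, fun a ℓ h hℓ₀ hℓ₁ hh₀ hhℓ => ?_⟩
  set W := cWindowH a ℓ h
  have hμ : ∀ᵐ z ∂μ, ‖z‖ ≤ 1 := by
    filter_upwards [ae_iff.mpr hsupp] with z hz
    simpa using hz
  have hlow : ∀ᵐ l ∂volume.restrict W, ENNReal.ofReal κ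
      ≤ ∫⁻ z, ENNReal.ofReal (weightedKernelPow p l z) ∂μ := by
    filter_upwards [ae_restrict_norm_lt_one (cWindowH_subset_closedBall a ℓ h)] with l hl
    exact ofReal_le_lintegral_weightedKernelPow hp.le μ hC₂ hl (hker l (mem_ball_zero_iff.mpr hl))
  calc ENNReal.ofReal (κ * (Real.pi / 2) * ℓ)
      = ENNReal.ofReal (1 / h) * (ENNReal.ofReal κ * ENNReal.ofReal (Real.pi * ℓ * h / 2)) := by
        rw [← ENNReal.ofReal_mul (by positivity), ← ENNReal.ofReal_mul (by positivity)]
        congr 1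
        field_simp
    _ ≤ ENNReal.ofReal (1 / h) * (ENNReal.ofReal κ * volume W) := by
        gcongr
        exact volume_cWindowH_ge hℓ₁ hh₀.le (hhℓ.trans hℓ₁)
    _ = ENNReal.ofReal (1 / h) * ∫⁻ _ in W, ENNReal.ofReal κ := by
        rw [setLIntegral_const, mul_comm (ENNReal.ofReal κ)]
    _ ≤ ENNReal.ofReal (1 / h) * ∫⁻ l in W, ∫⁻ z, ENNReal.ofReal (weightedKernelPow p l z) ∂μ :=
        mul_le_mul_right (lintegral_mono_ae hlow) _
    _ = ∫⁻ z, ENNReal.ofReal (1 / h) * (∫⁻ l in W, ENNReal.ofReal (weightedKernelPow p l z)) ∂μ := by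
        rw [lintegral_lintegral_swap (measurable_weightedKernelPow p).ennreal_ofReal.aemeasurable,
          lintegral_const_mul' _ _ ENNReal.ofReal_ne_top]
    _ = ∫⁻ z, ENNReal.ofReal (cPhi p a ℓ h z) ∂μ :=
        lintegral_congr_ae (hμ.mono fun z hz => (ofReal_cPhi_eq hp.le a ℓ hh₀ hz).symm)
end
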